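/- Let Γ ⊆ P(Σ^k) be convex, let ε > 0, and let Γ_ε = { η ∈ P(Σ^k) : inf_{μ ∉ Γ} ‖η − μ‖_∞ > ε }. If m > (k−1)/ε, then every word that is a concatenation of length-m words each with empirical k-tuple frequency in Γ_ε, itself has empirical k-tuple frequency in Γ. That is, R_m(Γ_ε) ⊆ B(Γ) where R_m(Γ_ε) = (B(Γ_ε) ∩ Σ^m)^*. -/

import Mathlib

open Finset

def occCount {A : Type*} [DecidableEq A] (k : ℕ) (ω : List A) (φ : Fin k → A) : ℕ :=
  ((Finset.range (ω.length - k + 1)).filter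
    (fun i => ∀ j : Fin k, ω[i + (j : ℕ)]? = some (φ j))).card

noncomputable def freq {A : Type*} [DecidableEq A] (k : ℕ) (ω : List A) (φ : Fin k → A) : ℝ :=
  (occCount k ω φ : ℝ) / ((ω.length - k + 1 : ℕ) : ℝ)

def IsProbVec {A : Type*} [Fintype A] {k : ℕ} (η : (Fin k → A) → ℝ) : Prop :=
  (∀ φ, 0 ≤ η φ) ∧ ∑ φ : Fin k → A, η φ = 1

def ShiftInv {A : Type*} [Fintype A] (k : ℕ) (η : (Fin (k + 2) → A) → ℝ) : Prop :=
  ∀ ψ : Fin (k + 1) → A, ∑ a : A, η (Fin.cons a ψ) = ∑ a : A, η (Fin.snoc ψ a)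

def genFrom {A V : Type*} (E : V → V → A → Prop) (ω : List A) : Prop :=
  ∃ f : Fin (ω.length + 1) → V, ∀ i : Fin ω.length, E (f i.castSucc) (f i.succ) (ω.get i)

noncomputable def capacity {A : Type*} (T : Set (List A)) : ℝ :=
  Filter.atTop.limsup fun n : ℕ =>
    Real.logb 2 (Nat.card {ω : List A // ω ∈ T ∧ ω.length = n}) / n

def memGammaEps {A : Type*} [Fintype A] [DecidableEq A] {k : ℕ}
    (Γ : Set ((Fin k → A) → ℝ)) (ε : ℝ) (η : (Fin k → A) → ℝ) : Prop :=
  IsProbVec η ∧ ∃ δ, ε < δ ∧ ∀ μ : (Fin k → A) → ℝ, IsProbVec μ → μ ∉ Γ → δ ≤ ‖η - μ‖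


/-!
Write the concatenation as `w ++ r` with `w` its first word and `r` the rest, of length at
least `k`. The windows of `w ++ r` that start inside `w` have a distribution `ξ` that differs
from `freq k w` by at most `(k - 1) / |w| ≤ ε` in sup norm, since only the last `k - 1` start
positions of `w` reach into `r`; as `freq k w ∈ Γ_ε`, this gives `ξ ∈ Γ`. Counting windows by
start position, `freq k (w ++ r)` is a convex combination of `ξ` and `freq k r`, so convexity
of `Γ` and induction on the number of words conclude.
-/

theorem abs_div_sub_div_add_le {o h e c : ℝ} (he : 0 < e) (hc : 0 ≤ c) (ho : 0 ≤ o)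
    (hoe : o ≤ e) (hoh : o ≤ h) (hho : h ≤ o + c) :
    |o / e - h / (e + c)| ≤ c / (e + c) := by
  have hec : 0 < e + c := by linarith
  have hc' : c / (e + c) = c * e / (e * (e + c)) := by field_simp
  rw [abs_sub_le_iff, div_sub_div _ _ he.ne' hec.ne', div_sub_div _ _ hec.ne' he.ne', hc',
    mul_comm (e + c) e]
  constructor <;> gcongr <;> nlinarith

section Occurrences

variable {A : Type*} (k : ℕ)

def OccursAt (ω : List A) (φ : Fin k → A) (i : ℕ) : Prop :=
  ∀ j : Fin k, ω[i + (j : ℕ)]? = some (φ j)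

variable {k}

theorem occursAt_append_length_add {w r : List A} {φ : Fin k → A} {i : ℕ} :
    OccursAt k (w ++ r) φ (w.length + i) ↔ OccursAt k r φ i := by
  simp only [OccursAt, add_assoc, List.getElem?_append_right (Nat.le_add_right _ _),
    Nat.add_sub_cancel_left]

theorem occursAt_append_of_add_le {w r : List A} {φ : Fin k → A} {i : ℕ}
    (h : i + k ≤ w.length) : OccursAt k (w ++ r) φ i ↔ OccursAt k w φ i :=
  forall_congr' fun j => by rw [List.getElem?_append_left (by omega)]

theorem occursAt_iff_eq {ω : List A} {φ : Fin k → A} {i : ℕ} (h : i + k ≤ ω.length) :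
    OccursAt k ω φ i ↔ φ = fun j : Fin k => ω[i + (j : ℕ)]'(by omega) := by
  simp only [OccursAt, funext_iff]
  refine forall_congr' fun j => ?_
  rw [List.getElem?_eq_getElem (by omega), Option.some_inj, eq_comm]

variable [DecidableEq A]

instance (ω : List A) (φ : Fin k → A) : DecidablePred (OccursAt k ω φ) :=
  fun _ => inferInstanceAs (Decidable (∀ _ : Fin k, _))

theorem occCount_eq_card_filter (ω : List A) (φ : Fin k → A) :
    occCount k ω φ = #((range (ω.length - k + 1)).filter (OccursAt k ω φ)) :=
  rfl

variable (k) in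
/-- Occurrences of `φ` in `w ++ r` that start inside `w`. -/
def headOccCount (w r : List A) (φ : Fin k → A) : ℕ :=
  #((range w.length).filter (OccursAt k (w ++ r) φ))

theorem occCount_append {w r : List A} (hr : k ≤ r.length) (φ : Fin k → A) :
    occCount k (w ++ r) φ = headOccCount k w r φ + occCount k r φ := by
  have hlen : (w ++ r).length - k + 1 = w.length + (r.length - k + 1) := by
    rw [List.length_append]; omega
  rw [occCount_eq_card_filter, occCount_eq_card_filter, headOccCount, hlen, range_add,
    filter_union, card_union_of_disjoint, filter_map, card_map]
  · simp only [Function.comp_def, addLeftEmbedding_apply, occursAt_append_length_add]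
  · refine disjoint_filter_filter (disjoint_left.2 ?_)
    simp only [mem_range, mem_map, addLeftEmbedding_apply]
    rintro _ hx ⟨q, -, rfl⟩
    omega

theorem occCount_le_headOccCount (hk : 1 ≤ k) {w : List A} (hw : k ≤ w.length) (r : List A)
    (φ : Fin k → A) : occCount k w φ ≤ headOccCount k w r φ := by
  refine card_le_card fun i hi => ?_
  simp only [mem_filter, mem_range] at hi ⊢
  exact ⟨by omega, (occursAt_append_of_add_le (by omega)).2 hi.2⟩

/-- Only the last `k - 1` start positions of `w` can see letters of `r`. -/
theorem headOccCount_le (hk : 1 ≤ k) {w : List A} (hw : k ≤ w.length) (r : List A)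
    (φ : Fin k → A) : headOccCount k w r φ ≤ occCount k w φ + (k - 1) := by
  have hsplit : range w.length = range (w.length - k + 1) ∪ Ico (w.length - k + 1) w.length := by
    rw [range_eq_Ico, range_eq_Ico, Ico_union_Ico_eq_Ico (Nat.zero_le _) (by omega)]
  rw [headOccCount, hsplit, filter_union]
  refine (card_union_le _ _).trans (add_le_add (card_le_card fun i hi => ?_) ?_)
  · simp only [mem_filter, mem_range] at hi ⊢
    exact ⟨hi.1, (occursAt_append_of_add_le (by omega)).1 hi.2⟩
  · exact (card_filter_le _ _).trans (by rw [Nat.card_Ico]; omega)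

theorem occCount_le (ω : List A) (φ : Fin k → A) : occCount k ω φ ≤ ω.length - k + 1 :=
  (card_filter_le _ _).trans (card_range _).le

theorem occCount_eq_zero_of_length_lt {ω : List A} (h : ω.length < k) (φ : Fin k → A) :
    occCount k ω φ = 0 := by
  rw [occCount_eq_card_filter, card_eq_zero, filter_eq_empty_iff]
  intro i hi hocc
  rw [mem_range] at hi
  have : ω[i + (k - 1)]? = some (φ ⟨k - 1, by omega⟩) := hocc ⟨k - 1, by omega⟩
  rw [List.getElem?_eq_none (by omega)] at this
  exact Option.some_ne_none _ this.symm

variable (k) in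
noncomputable def headFreq (w r : List A) (φ : Fin k → A) : ℝ :=
  (headOccCount k w r φ : ℝ) / w.length

theorem freq_append {w r : List A} (hw : w ≠ []) (hr : k ≤ r.length) :
    freq k (w ++ r) =
      ((w.length : ℝ) / (w.length + (r.length - k + 1 : ℕ))) • headFreq k w r +
        (((r.length - k + 1 : ℕ) : ℝ) / (w.length + (r.length - k + 1 : ℕ))) • freq k r := by
  have hwlen : (w.length : ℝ) ≠ 0 := Nat.cast_ne_zero.2 (List.length_pos_iff.2 hw).ne'
  have hlen : (w ++ r).length - k + 1 = w.length + (r.length - k + 1) := by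
    rw [List.length_append]; omega
  funext φ
  simp only [freq, headFreq, occCount_append hr, hlen, Pi.add_apply, Pi.smul_apply, smul_eq_mul]
  field_simp
  push_cast
  ring

variable [Fintype A]

theorem card_filter_occursAt {ω : List A} {i : ℕ} (h : i + k ≤ ω.length) :
    #(univ.filter fun φ : Fin k → A => OccursAt k ω φ i) = 1 := by
  simp only [occursAt_iff_eq h, filter_eq', mem_univ, if_true, card_singleton]

theorem sum_headOccCount (w : List A) {r : List A} (hr : k ≤ r.length) :
    ∑ φ : Fin k → A, headOccCount k w r φ = w.length := by
  simp only [headOccCount, card_filter]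
  rw [sum_comm]
  calc ∑ i ∈ range w.length, ∑ φ : Fin k → A, (if OccursAt k (w ++ r) φ i then 1 else 0)
      = ∑ i ∈ range w.length, 1 := sum_congr rfl fun i hi => by
        rw [mem_range] at hi
        rw [← card_filter, card_filter_occursAt (by rw [List.length_append]; omega)]
    _ = w.length := by simp

theorem le_length_of_isProbVec_freq {ω : List A} (h : IsProbVec (freq k ω)) : k ≤ ω.length := by
  by_contra! hlt
  have hsum := h.2
  simp [freq, occCount_eq_zero_of_length_lt hlt] at hsum

theorem isProbVec_headFreq {w r : List A} (hw : w ≠ []) (hr : k ≤ r.length) :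
    IsProbVec (headFreq k w r) := by
  refine ⟨fun φ => by unfold headFreq; positivity, ?_⟩
  unfold headFreq
  rw [← sum_div, ← Nat.cast_sum, sum_headOccCount w hr,
    div_self (Nat.cast_ne_zero.2 (List.length_pos_iff.2 hw).ne')]

theorem norm_freq_sub_headFreq_le (hk : 1 ≤ k) {w : List A} (hw : k ≤ w.length) (r : List A) :
    ‖freq k w - headFreq k w r‖ ≤ ((k : ℝ) - 1) / w.length := by
  have hk' : (0 : ℝ) ≤ k - 1 := sub_nonneg.2 (Nat.one_le_cast.2 hk)
  have hlen : (w.length : ℝ) = ((w.length - k + 1 : ℕ) : ℝ) + ((k : ℝ) - 1) := by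
    rw [Nat.cast_add, Nat.cast_sub hw]; ring
  refine (pi_norm_le_iff_of_nonneg (div_nonneg hk' (Nat.cast_nonneg _))).2 fun φ => ?_
  have hupper : (headOccCount k w r φ : ℝ) ≤ occCount k w φ + ((k : ℝ) - 1) := by
    have := Nat.cast_le (α := ℝ) |>.2 (headOccCount_le hk hw r φ)
    rwa [Nat.cast_add, Nat.cast_sub hk, Nat.cast_one] at this
  rw [Pi.sub_apply, Real.norm_eq_abs, freq, headFreq, hlen]
  exact abs_div_sub_div_add_le (by positivity) hk' (Nat.cast_nonneg _)
    (Nat.cast_le.2 (occCount_le w φ)) (Nat.cast_le.2 (occCount_le_headOccCount hk hw r φ)) hupper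

end Occurrences

section Concatenation

variable {A : Type*} [Fintype A] [DecidableEq A] {k : ℕ} {Γ : Set ((Fin k → A) → ℝ)} {ε : ℝ}

theorem memGammaEps.mem_of_norm_sub_le {η ξ : (Fin k → A) → ℝ} (h : memGammaEps Γ ε η)
    (hξ : IsProbVec ξ) (hηξ : ‖η - ξ‖ ≤ ε) : ξ ∈ Γ := by
  obtain ⟨-, δ, hεδ, hδ⟩ := h
  by_contra hξΓ
  linarith [hδ ξ hξ hξΓ]

theorem freq_append_mem (hk : 1 ≤ k) (hconv : Convex ℝ Γ) {w r : List A}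
    (hw : memGammaEps Γ ε (freq k w)) (hwε : ((k : ℝ) - 1) / w.length ≤ ε) (hr : k ≤ r.length)
    (hrΓ : freq k r ∈ Γ) : freq k (w ++ r) ∈ Γ := by
  have hwk : k ≤ w.length := le_length_of_isProbVec_freq hw.1
  have hne : w ≠ [] := List.ne_nil_of_length_pos (by omega)
  have hhead : headFreq k w r ∈ Γ := hw.mem_of_norm_sub_le (isProbVec_headFreq hne hr)
    ((norm_freq_sub_headFreq_le hk hwk r).trans hwε)
  rw [freq_append hne hr]
  exact convex_iff_div.1 hconv hhead hrΓ (Nat.cast_nonneg _) (Nat.cast_nonneg _) (by positivity)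

theorem freq_flatten_mem (hk : 1 ≤ k) (hconv : Convex ℝ Γ) {L : List (List A)}
    (hL : ∀ w ∈ L, memGammaEps Γ ε (freq k w) ∧ ((k : ℝ) - 1) / w.length ≤ ε) (hne : L ≠ []) :
    freq k L.flatten ∈ Γ := by
  induction L with
  | nil => exact absurd rfl hne
  | cons w L ih =>
    obtain ⟨hw, hwε⟩ := hL w List.mem_cons_self
    rcases L with _ | ⟨v, L⟩
    · have hε : 0 ≤ ε :=
        (div_nonneg (sub_nonneg.2 (Nat.one_le_cast.2 hk)) (Nat.cast_nonneg _)).trans hwε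
      simpa using hw.mem_of_norm_sub_le hw.1 (by simpa using hε)
    · have hv : k ≤ v.length := le_length_of_isProbVec_freq (hL v (by simp)).1.1
      have hrest : freq k (v :: L).flatten ∈ Γ :=
        ih (fun u hu => hL u (List.mem_cons_of_mem _ hu)) (List.cons_ne_nil _ _)
      exact freq_append_mem hk hconv hw hwε
        (by rw [List.flatten_cons, List.length_append]; omega) hrest

end Concatenation

theorem stmt4_general {A : Type*} [Fintype A] [DecidableEq A] (k m : ℕ) (hk : 1 ≤ k)
    (Γ : Set ((Fin k → A) → ℝ)) (hconv : Convex ℝ Γ)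
    (ε : ℝ) (hε : 0 < ε) (hm : ((k : ℝ) - 1) / ε < (m : ℝ))
    (L : List (List A)) (hL : ∀ w ∈ L, w.length = m ∧ memGammaEps Γ ε (freq k w))
    (hne : L ≠ []) :
    freq k L.flatten ∈ Γ := by
  have hm0 : (0 : ℝ) < m :=
    (div_nonneg (sub_nonneg.2 (Nat.one_le_cast.2 hk)) hε.le).trans_lt hm
  have hmε : ((k : ℝ) - 1) / m ≤ ε := by
    rw [div_lt_iff₀ hε] at hm
    rw [div_le_iff₀ hm0]
    linarith
  exact freq_flatten_mem hk hconv (fun w hw => ⟨(hL w hw).2, (hL w hw).1 ▸ hmε⟩) hne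

theorem stmt4 {A : Type*} [Fintype A] [DecidableEq A] (k m : ℕ) (hk : 1 ≤ k)
    (Γ : Set ((Fin k → A) → ℝ)) (hΓP : ∀ η ∈ Γ, IsProbVec η) (hconv : Convex ℝ Γ)
    (ε : ℝ) (hε : 0 < ε) (hm : ((k : ℝ) - 1) / ε < (m : ℝ))
    (L : List (List A)) (hL : ∀ w ∈ L, w.length = m ∧ memGammaEps Γ ε (freq k w))
    (hne : L ≠ []) :
    freq k L.flatten ∈ Γ :=
  stmt4_general k m hk Γ hconv ε hε hm L hL hne
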